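/- arXiv:1401.0791 — 2 statements merged into one kernel-verified Lean document; each statement's English description precedes it below -/
import Mathlib

section
/- Let A be an abelian group such that the profinite completion = lim A/mA has finite exponent. Then the natural map A → Â is surjective and its kernel is a divisible group; in particular A is an extension of Â by a divisible group. -/
/-!
If `e` kills the completion, it kills in particular the image of every `b : A`, so
`eA ⊆ mA` for all `m`. Then a lift of the `e`-th component of a compatible family
is a lift of every component, since two lifts of the component at `em` differ by an
element of `eA ⊆ mA`. Likewise, if `a ∈ ⋂ mA`, write `a = (ne) • x`; then `e • x`
is an `n`-th root of `a` lying in `eA ⊆ ⋂ mA`.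
-/

/-- The subgroup `nA` of an abelian group `A`. -/
def nsub (A : Type) [AddCommGroup A] (n : ℕ) : AddSubgroup A :=
  AddMonoidHom.range (n • AddMonoidHom.id A)

theorem nsub_le (A : Type) [AddCommGroup A] {m n : ℕ} (h : m ∣ n) :
    nsub A n ≤ nsub A m := by
  rintro x ⟨a, rfl⟩
  obtain ⟨k, rfl⟩ := h
  exact ⟨k • a, by simp [mul_smul]⟩

/-- Transition map `A/nA → A/mA` for `m ∣ n`. -/
def transMap (A : Type) [AddCommGroup A] {m n : ℕ} (h : m ∣ n) :
    (A ⧸ nsub A n) →+ (A ⧸ nsub A m) :=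
  QuotientAddGroup.map _ _ (AddMonoidHom.id A) (fun x hx => nsub_le A h hx)

section Completion

variable {A : Type} [AddCommGroup A]

/-- Elements of the completion `Â = lim A/mA`. -/
def IsCompatibleFamily (f : ∀ m : ℕ+, A ⧸ nsub A m) : Prop :=
  ∀ (m n : ℕ+) (h : (m : ℕ) ∣ (n : ℕ)), transMap A h (f n) = f m

theorem transMap_mk {m n : ℕ} (h : m ∣ n) (a : A) :
    transMap A h (a : A ⧸ nsub A n) = (a : A ⧸ nsub A m) := rfl

theorem isCompatibleFamily_mk (a : A) :
    IsCompatibleFamily (fun m : ℕ+ => (a : A ⧸ nsub A m)) :=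
  fun _ _ h => transMap_mk h a

theorem IsCompatibleFamily.mk_eq {f : ∀ m : ℕ+, A ⧸ nsub A m} (hf : IsCompatibleFamily f)
    {m n : ℕ+} (h : (m : ℕ) ∣ (n : ℕ)) {c : A} (hc : (c : A ⧸ nsub A n) = f n) :
    (c : A ⧸ nsub A m) = f m := by
  rw [← hf m n h, ← hc, transMap_mk]

theorem nsub_le_of_nsmul_completion_eq_zero {e : ℕ}
    (hE : ∀ f : ∀ m : ℕ+, A ⧸ nsub A m, IsCompatibleFamily f → e • f = 0) (m : ℕ+) :
    nsub A e ≤ nsub A m := by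
  rintro _ ⟨b, rfl⟩
  rw [← QuotientAddGroup.eq_zero_iff]
  simpa using congrFun (hE _ (isCompatibleFamily_mk b)) m

theorem exists_mk_eq_of_nsub_le {e : ℕ+} (hle : ∀ m : ℕ+, nsub A e ≤ nsub A m)
    {f : ∀ m : ℕ+, A ⧸ nsub A m} (hf : IsCompatibleFamily f) :
    ∃ a : A, (fun m : ℕ+ => (a : A ⧸ nsub A m)) = f := by
  obtain ⟨a, ha⟩ := QuotientAddGroup.mk_surjective (f e)
  refine ⟨a, funext fun m => ?_⟩
  obtain ⟨c, hc⟩ := QuotientAddGroup.mk_surjective (f (e * m))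
  have hce : (c : A ⧸ nsub A e) = (a : A ⧸ nsub A e) :=
    (hf.mk_eq (dvd_mul_right (e : ℕ) m) hc).trans ha.symm
  rw [← hf.mk_eq (dvd_mul_left (m : ℕ) e) hc]
  exact QuotientAddGroup.eq.mpr (hle m (QuotientAddGroup.eq.mp hce.symm))

theorem exists_nsmul_eq_of_nsub_le {e : ℕ+} (hle : ∀ m : ℕ+, nsub A e ≤ nsub A m)
    {n : ℕ} (hn : 0 < n) {a : A} (ha : ∀ m : ℕ+, (a : A ⧸ nsub A m) = 0) :
    ∃ b : A, (∀ m : ℕ+, (b : A ⧸ nsub A m) = 0) ∧ n • b = a := by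
  obtain ⟨x, rfl⟩ := (QuotientAddGroup.eq_zero_iff _).mp (ha ⟨n * e, Nat.mul_pos hn e.pos⟩)
  refine ⟨(e : ℕ) • x, fun m => (QuotientAddGroup.eq_zero_iff _).mpr (hle m ⟨x, rfl⟩), ?_⟩
  simp [smul_smul]

end Completion

/-- If the profinite completion `Â = lim A/mA` (compatible families over positive
integers ordered by divisibility) has finite exponent, then the natural map
`A → Â` is surjective and its kernel is divisible: `A` is an extension of `Â` by
a divisible group. -/
theorem statement0 (A : Type) [AddCommGroup A]
    (hexp : ∃ e : ℕ, 0 < e ∧ ∀ f : ∀ m : ℕ+, A ⧸ nsub A m,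
      (∀ (m n : ℕ+) (h : (m : ℕ) ∣ (n : ℕ)), transMap A h (f n) = f m) → e • f = 0) :
    (∀ f : ∀ m : ℕ+, A ⧸ nsub A m,
      (∀ (m n : ℕ+) (h : (m : ℕ) ∣ (n : ℕ)), transMap A h (f n) = f m) →
      ∃ a : A, (fun m : ℕ+ => ((a : A ⧸ nsub A m))) = f) ∧
    (∀ n : ℕ, 0 < n → ∀ a : A, (∀ m : ℕ+, ((a : A ⧸ nsub A m)) = 0) →
      ∃ b : A, (∀ m : ℕ+, ((b : A ⧸ nsub A m)) = 0) ∧ n • b = a) := by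
  obtain ⟨e, he, hE⟩ := hexp
  have hle : ∀ m : ℕ+, nsub A (⟨e, he⟩ : ℕ+) ≤ nsub A m :=
    nsub_le_of_nsmul_completion_eq_zero hE
  exact ⟨fun _ hf => exists_mk_eq_of_nsub_le hle hf,
    fun _ hn _ ha => exists_nsmul_eq_of_nsub_le hle hn ha⟩
end

section
/- Let A be an abelian group whose profinite completion Â is finite. Then A is the extension of a finite group by a divisible group, and the maximal divisible subgroup of A equals the kernel of A → Â. -/
section

variable (A : Type) [AddCommGroup A]

/-- The profinite completion `Â = lim A/mA`, as the set of compatible families. -/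
def completion : Set (∀ m : ℕ+, A ⧸ nsub A m) :=
  {f | ∀ (m n : ℕ+) (h : (m : ℕ) ∣ (n : ℕ)), transMap A h (f n) = f m}

def toCompletion : A →+ ∀ m : ℕ+, A ⧸ nsub A m :=
  AddMonoidHom.pi fun m => QuotientAddGroup.mk' (nsub A m)

theorem toCompletion_mem_completion (a : A) : toCompletion A a ∈ completion A :=
  fun _ _ _ => rfl

theorem ker_toCompletion : (toCompletion A).ker = ⨅ m : ℕ+, nsub A m := by
  ext a
  simp [toCompletion, AddSubgroup.mem_iInf, funext_iff, QuotientAddGroup.eq_zero_iff]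

theorem finite_quotient_iInf_nsub (hfin : (completion A).Finite) :
    Finite (A ⧸ ⨅ m : ℕ+, nsub A m) := by
  have hrange : ((toCompletion A).range : Set _).Finite :=
    hfin.subset <| Set.range_subset_iff.mpr (toCompletion_mem_completion A)
  have := hrange.to_subtype
  rw [← ker_toCompletion]
  exact Finite.of_equiv _ (QuotientAddGroup.quotientKerEquivRange (toCompletion A)).symm.toEquiv

variable {A}

theorem mem_nsub {n : ℕ} {a : A} : a ∈ nsub A n ↔ ∃ c : A, n • c = a := by
  simp [nsub, AddMonoidHom.mem_range]

theorem exists_nsmul_eq_of_mem_iInf_nsub [Finite (A ⧸ ⨅ m : ℕ+, nsub A m)] {n : ℕ}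
    (hn : 0 < n) {a : A} (ha : a ∈ ⨅ m : ℕ+, nsub A m) :
    ∃ b ∈ ⨅ m : ℕ+, nsub A m, n • b = a := by
  set N := (⨅ m : ℕ+, nsub A m).index
  have hN : 0 < N := Nat.pos_of_ne_zero AddSubgroup.index_ne_zero_of_finite
  obtain ⟨c, hc⟩ := mem_nsub.mp
    (AddSubgroup.mem_iInf.mp ha ⟨n * N, Nat.mul_pos hn hN⟩)
  exact ⟨N • c, AddSubgroup.nsmul_index_mem _ c, by rwa [smul_smul]⟩

theorem le_iInf_nsub_of_divisible {D : AddSubgroup A}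
    (hD : ∀ n : ℕ, 0 < n → ∀ a ∈ D, ∃ b : A, n • b = a) :
    D ≤ ⨅ m : ℕ+, nsub A m := fun a ha =>
  AddSubgroup.mem_iInf.mpr fun m => mem_nsub.mpr (hD m m.pos a ha)

end

/-- If the profinite completion `Â` of `A` is finite, then `A` is the extension of a
finite group by a divisible group: the kernel `K = ⋂ mA` of `A → Â` is divisible,
`A/K` is finite, and `K` is the maximal divisible subgroup of `A`. -/
theorem statement7 (A : Type) [AddCommGroup A]
    (hfin : {f : ∀ m : ℕ+, A ⧸ nsub A m |
      ∀ (m n : ℕ+) (h : (m : ℕ) ∣ (n : ℕ)), transMap A h (f n) = f m}.Finite) :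
    (∀ n : ℕ, 0 < n → ∀ a ∈ ⨅ m : ℕ+, nsub A (m : ℕ),
      ∃ b ∈ ⨅ m : ℕ+, nsub A (m : ℕ), n • b = a) ∧
    Finite (A ⧸ ⨅ m : ℕ+, nsub A (m : ℕ)) ∧
    (∀ D : AddSubgroup A, (∀ n : ℕ, 0 < n → ∀ a ∈ D, ∃ b ∈ D, n • b = a) →
      D ≤ ⨅ m : ℕ+, nsub A (m : ℕ)) := by
  have := finite_quotient_iInf_nsub A hfin
  refine ⟨fun n hn a ha => exists_nsmul_eq_of_mem_iInf_nsub hn ha, this, fun D hD => ?_⟩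
  exact le_iInf_nsub_of_divisible fun n hn a ha => (hD n hn a ha).imp fun _ hb => hb.2
end
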